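/- Let a₁,…,a_c be linearly independent with Gram–Schmidt vectors ã₁,…,ã_c, and suppose for each j the residual component satisfies |⟨residual, ãⱼ⟩|/‖ãⱼ‖ ≤ ‖ãⱼ‖/2. Then the residual lies in the hyper-cuboid {Σⱼ tⱼ ãⱼ/‖ãⱼ‖ : |tⱼ| ≤ ‖ãⱼ‖/2}, and distinct targets in the interiors of translates of this cuboid by distinct lattice points are rounded by Babai's algorithm to those distinct lattice points; i.e., the Babai rounding regions tile ℝ^span(A) by translates of the cuboid. -/

import Mathlib

/-!
Write `g = gramSchmidt a`. Since `⟪g j, a i⟫` vanishes for `i < j` and equals `‖g j‖²` for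
`i = j`, the `g j`-coordinate of the final residual `y - A z` is the number `p` that Babai rounds at
step `j` minus `z j ‖g j‖²`, i.e. `(x - round x) ‖g j‖²` with `x = p / ‖g j‖²`; expanding the
residual in the orthogonal family `g` puts it in the closed cuboid. Conversely, if
`y = A z + Σ (t j / ‖g j‖) g j` with `|t j| < ‖g j‖ / 2`, downward induction on `j` shows that the
number rounded at step `j` is `z j + t j / ‖g j‖`, which rounds to `z j`.
-/
open Matrix
open scoped RealInnerProductSpace

/-- Gram–Schmidt orthogonalization of a finite family (the unnormalized
Gram–Schmidt vectors `ãⱼ = aⱼ − Σ_{k<j} (⟪ã_k,aⱼ⟫/‖ã_k‖²) ã_k`). -/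
noncomputable def gramSchmidtFin {n c : ℕ} (a : Fin c → EuclideanSpace ℝ (Fin n)) :
    Fin c → EuclideanSpace ℝ (Fin n) :=
  letI : WellFoundedLT (Fin c) := inferInstance
  InnerProductSpace.gramSchmidt ℝ a


/-- The residual vector of Babai's nearest plane algorithm after `k` steps
(back-to-front: step `k+1` handles index `c-(k+1)`). -/
noncomputable def babaiRes {n c : ℕ} (a gs : Fin c → EuclideanSpace ℝ (Fin n))
    (y : EuclideanSpace ℝ (Fin n)) : ℕ → EuclideanSpace ℝ (Fin n)
  | 0 => y
  | (k+1) =>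
      if h : c - (k+1) < c then
        let i : Fin c := ⟨c - (k+1), h⟩
        let r := babaiRes a gs y k
        r - ((round (⟪gs i, r⟫ / ⟪gs i, a i⟫) : ℤ) : ℝ) • a i
      else babaiRes a gs y k

/-- The integer coefficients output by Babai's nearest plane algorithm. -/
noncomputable def babaiZ {n c : ℕ} (a gs : Fin c → EuclideanSpace ℝ (Fin n))
    (y : EuclideanSpace ℝ (Fin n)) (j : Fin c) : ℤ :=
  round (⟪gs j, babaiRes a gs y (c - 1 - (j : ℕ))⟫ / ⟪gs j, a j⟫)

open Finset InnerProductSpace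

section Orthogonal

variable {E ι : Type*} [NormedAddCommGroup E] [InnerProductSpace ℝ E] [Fintype ι]

theorem inner_sum_smul_of_pairwise_inner_eq_zero {v : ι → E}
    (hv : Pairwise fun i j ↦ ⟪v i, v j⟫ = 0) (w : ι → ℝ) (j : ι) :
    ⟪v j, ∑ i, w i • v i⟫ = w j * ‖v j‖ ^ 2 := by
  rw [inner_sum, sum_eq_single j, real_inner_smul_right, real_inner_self_eq_norm_sq]
  · intro i _ hij
    rw [real_inner_smul_right, hv hij.symm, mul_zero]
  · simp

theorem sum_inner_div_norm_sq_smul_of_mem_span {v : ι → E}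
    (hv : Pairwise fun i j ↦ ⟪v i, v j⟫ = 0) {x : E} (hx : x ∈ Submodule.span ℝ (Set.range v)) :
    ∑ j, (⟪v j, x⟫ / ‖v j‖ ^ 2) • v j = x := by
  obtain ⟨w, rfl⟩ := Submodule.mem_span_range_iff_exists_fun ℝ |>.1 hx
  refine sum_congr rfl fun j _ ↦ ?_
  rcases eq_or_ne (v j) 0 with hj | hj
  · simp [hj]
  · rw [inner_sum_smul_of_pairwise_inner_eq_zero hv,
      mul_div_cancel_right₀ _ (by positivity)]

theorem exists_cuboid_coords_of_abs_inner_le {v : ι → E}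
    (hv : Pairwise fun i j ↦ ⟪v i, v j⟫ = 0) {x : E} (hx : x ∈ Submodule.span ℝ (Set.range v))
    (hbound : ∀ j, |⟪v j, x⟫| ≤ ‖v j‖ ^ 2 / 2) :
    ∃ t : ι → ℝ, (∀ j, |t j| ≤ ‖v j‖ / 2) ∧ x = ∑ j, (t j / ‖v j‖) • v j := by
  refine ⟨fun j ↦ ⟪v j, x⟫ / ‖v j‖, fun j ↦ ?_, ?_⟩
  · rcases eq_or_ne (v j) 0 with hj | hj
    · simp [hj]
    · have hpos : 0 < ‖v j‖ := norm_pos_iff.2 hj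
      rw [abs_div, abs_norm, div_le_iff₀ hpos]
      linarith [hbound j]
  · simp_rw [div_div, ← sq]
    exact (sum_inner_div_norm_sq_smul_of_mem_span hv hx).symm

end Orthogonal

theorem abs_sub_round_div_mul_le {p q : ℝ} (hq : 0 < q) : |p - round (p / q) * q| ≤ q / 2 := by
  have h := abs_sub_round (p / q)
  calc |p - round (p / q) * q| = |p / q - round (p / q)| * q := by
        rw [← abs_of_pos hq, ← abs_mul, abs_of_pos hq, sub_mul, div_mul_cancel₀ _ hq.ne']
    _ ≤ 1 / 2 * q := by gcongr
    _ = q / 2 := by ring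

section GramSchmidt

variable {E ι : Type*} [NormedAddCommGroup E] [InnerProductSpace ℝ E]
  [LinearOrder ι] [LocallyFiniteOrderBot ι] [WellFoundedLT ι]

theorem inner_gramSchmidt_self_eq_norm_sq (f : ι → E) (j : ι) :
    ⟪gramSchmidt ℝ f j, f j⟫ = ‖gramSchmidt ℝ f j‖ ^ 2 := by
  conv_lhs => rw [gramSchmidt_def'' ℝ f j]
  rw [inner_add_right, inner_sum, real_inner_self_eq_norm_sq, sum_eq_zero, add_zero]
  intro i hi
  rw [real_inner_smul_right, gramSchmidt_orthogonal ℝ f (mem_Iio.1 hi).ne', mul_zero]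

theorem inner_gramSchmidt_sum_smul_of_le (f : ι → E) (w : ι → ℝ) {j : ι} {s : Finset ι}
    (hj : j ∈ s) (hs : ∀ i ∈ s, i ≤ j) :
    ⟪gramSchmidt ℝ f j, ∑ i ∈ s, w i • f i⟫ = w j * ‖gramSchmidt ℝ f j‖ ^ 2 := by
  rw [inner_sum, sum_eq_single_of_mem j hj, real_inner_smul_right,
    inner_gramSchmidt_self_eq_norm_sq]
  intro i hi hij
  rw [real_inner_smul_right, gramSchmidt_inv_triangular ℝ f ((hs i hi).lt_of_ne hij), mul_zero]

theorem inner_gramSchmidt_sub_sum_Ioi [Fintype ι] [LocallyFiniteOrderTop ι]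
    (f : ι → E) (w : ι → ℝ) (x : E) (j : ι) :
    ⟪gramSchmidt ℝ f j, x - ∑ i ∈ Ioi j, w i • f i⟫ =
      ⟪gramSchmidt ℝ f j, x - ∑ i, w i • f i⟫ + w j * ‖gramSchmidt ℝ f j‖ ^ 2 := by
  rw [← sum_add_sum_compl (Ioi j), ← inner_gramSchmidt_sum_smul_of_le f w (s := (Ioi j)ᶜ)
    (by simp) (by simp), ← inner_add_right]
  congr 1
  abel

end GramSchmidt

theorem gramSchmidtFin_eq {n c : ℕ} (a : Fin c → EuclideanSpace ℝ (Fin n)) :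
    gramSchmidtFin a = gramSchmidt ℝ a := rfl

section Babai

variable {n c : ℕ} (a gs : Fin c → EuclideanSpace ℝ (Fin n)) (y : EuclideanSpace ℝ (Fin n))

-- For `k > c` the index `c - k` truncates to `0` and `babaiRes` keeps reducing along `a 0`.
theorem babaiRes_eq_sub_sum {k : ℕ} (hk : k ≤ c) :
    babaiRes a gs y k = y - ∑ i : Fin c with c - k ≤ i.val, (babaiZ a gs y i : ℝ) • a i := by
  induction k with
  | zero =>
    rw [filter_false_of_mem fun i _ ↦ not_le.2 i.is_lt]
    simp [babaiRes]
  | succ k ih =>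
    have hlt : c - (k + 1) < c := by omega
    have hinsert : univ.filter (fun i : Fin c ↦ c - (k + 1) ≤ i.val) =
        insert ⟨c - (k + 1), hlt⟩ (univ.filter fun i : Fin c ↦ c - k ≤ i.val) := by
      ext i
      simp only [mem_filter, mem_univ, true_and, mem_insert, Fin.ext_iff]
      omega
    have hz : babaiZ a gs y ⟨c - (k + 1), hlt⟩ =
        round (⟪gs ⟨c - (k + 1), hlt⟩, babaiRes a gs y k⟫ /
          ⟪gs ⟨c - (k + 1), hlt⟩, a ⟨c - (k + 1), hlt⟩⟫) := by
      rw [babaiZ, show c - 1 - (c - (k + 1)) = k by omega]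
    rw [babaiRes, dif_pos hlt]
    dsimp only
    rw [hinsert, sum_insert (by simp; omega), ← hz, ih (by omega)]
    abel

theorem babaiZ_eq_round (j : Fin c) :
    babaiZ a gs y j =
      round (⟪gs j, y - ∑ i ∈ Ioi j, (babaiZ a gs y i : ℝ) • a i⟫ / ⟪gs j, a j⟫) := by
  have hIoi : univ.filter (fun i : Fin c ↦ c - (c - 1 - j.val) ≤ i.val) = Ioi j := by
    ext i
    simp only [mem_filter, mem_univ, true_and, mem_Ioi, Fin.lt_def]
    omega
  rw [babaiZ, babaiRes_eq_sub_sum a gs y (by omega), hIoi]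

end Babai

section BabaiGramSchmidt

variable {n c : ℕ} (a : Fin c → EuclideanSpace ℝ (Fin n)) (y : EuclideanSpace ℝ (Fin n))

theorem abs_inner_gramSchmidt_babai_residual_le (j : Fin c) :
    |⟪gramSchmidt ℝ a j, y - ∑ i, (babaiZ a (gramSchmidt ℝ a) y i : ℝ) • a i⟫| ≤
      ‖gramSchmidt ℝ a j‖ ^ 2 / 2 := by
  set g := gramSchmidt ℝ a
  rcases eq_or_ne (g j) 0 with hj | hj
  · simp [hj]
  have hround := babaiZ_eq_round a g y j
  rw [inner_gramSchmidt_self_eq_norm_sq] at hround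
  have hsplit := inner_gramSchmidt_sub_sum_Ioi a (fun i ↦ (babaiZ a g y i : ℝ)) y j
  rw [eq_sub_of_add_eq hsplit.symm, hround]
  exact abs_sub_round_div_mul_le (by positivity)

theorem babaiZ_eq_of_eq_add_cuboid (z : Fin c → ℤ) (t : Fin c → ℝ)
    (ht : ∀ j, |t j| < ‖gramSchmidt ℝ a j‖ / 2)
    (hy : y = ∑ j, (z j : ℝ) • a j + ∑ j, (t j / ‖gramSchmidt ℝ a j‖) • gramSchmidt ℝ a j) :
    babaiZ a (gramSchmidt ℝ a) y = z := by
  set g := gramSchmidt ℝ a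
  funext j
  induction j using WellFoundedGT.induction with
  | _ j ih =>
  have hpos : 0 < ‖g j‖ := by linarith [abs_nonneg (t j), ht j]
  have hinner : ⟪g j, y - ∑ i ∈ Ioi j, (babaiZ a g y i : ℝ) • a i⟫ =
      (z j + t j / ‖g j‖) * ‖g j‖ ^ 2 := by
    rw [sum_congr rfl fun i hi ↦ by rw [ih i (mem_Ioi.1 hi)], inner_gramSchmidt_sub_sum_Ioi,
      sub_eq_of_eq_add' hy, inner_sum_smul_of_pairwise_inner_eq_zero
        (gramSchmidt_pairwise_orthogonal ℝ a)]
    ring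
  have hsmall : round (t j / ‖g j‖) = 0 := by
    have hlt : |t j / ‖g j‖| < 1 / 2 := by
      rw [abs_div, abs_norm, div_lt_iff₀ hpos]
      linarith [ht j]
    rw [round_eq_zero_iff]
    exact ⟨by linarith [neg_abs_le (t j / ‖g j‖)], by linarith [le_abs_self (t j / ‖g j‖)]⟩
  rw [babaiZ_eq_round, hinner, inner_gramSchmidt_self_eq_norm_sq,
    mul_div_cancel_right₀ _ (by positivity), round_intCast_add, hsmall, add_zero]

end BabaiGramSchmidt

theorem babai_regions_tile_general {n c : ℕ} (a : Fin c → EuclideanSpace ℝ (Fin n))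
    (gs : Fin c → EuclideanSpace ℝ (Fin n)) (hgs : gs = gramSchmidtFin a) :
    (∀ y ∈ Submodule.span ℝ (Set.range a), ∃ t : Fin c → ℝ,
        (∀ j, |t j| ≤ ‖gs j‖ / 2) ∧
        y - ∑ j, (babaiZ a gs y j : ℝ) • a j = ∑ j, (t j / ‖gs j‖) • gs j) ∧
    (∀ (z : Fin c → ℤ) (y : EuclideanSpace ℝ (Fin n)) (t : Fin c → ℝ),
        (∀ j, |t j| < ‖gs j‖ / 2) →
        y = (∑ j, (z j : ℝ) • a j) + ∑ j, (t j / ‖gs j‖) • gs j →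
        babaiZ a gs y = z) := by
  subst hgs
  rw [gramSchmidtFin_eq]
  refine ⟨fun y hy ↦ ?_, fun z y t ht hy ↦ babaiZ_eq_of_eq_add_cuboid a y z t ht hy⟩
  refine exists_cuboid_coords_of_abs_inner_le (gramSchmidt_pairwise_orthogonal ℝ a) ?_
    (abs_inner_gramSchmidt_babai_residual_le a y)
  rw [span_gramSchmidt]
  exact sub_mem hy (Submodule.sum_smul_mem _ _ fun j _ ↦ Submodule.subset_span ⟨j, rfl⟩)

/-- (i) for any target `y ∈ span(A)`, Babai's residual `y − A z` lies in
the hyper-cuboid `{Σⱼ tⱼ gsⱼ/‖gsⱼ‖ : |tⱼ| ≤ ‖gsⱼ‖/2}`; (ii) any target in the interior of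
the translate of this cuboid by a lattice point `A z` is rounded by Babai's algorithm
to exactly that lattice point, so the rounding regions tile `span(A)` by translates of
the cuboid. -/
theorem babai_regions_tile {n c : ℕ} (a : Fin c → EuclideanSpace ℝ (Fin n))
    (ha : LinearIndependent ℝ a)
    (gs : Fin c → EuclideanSpace ℝ (Fin n)) (hgs : gs = gramSchmidtFin a) :
    (∀ y ∈ Submodule.span ℝ (Set.range a), ∃ t : Fin c → ℝ,
        (∀ j, |t j| ≤ ‖gs j‖ / 2) ∧
        y - ∑ j, (babaiZ a gs y j : ℝ) • a j = ∑ j, (t j / ‖gs j‖) • gs j) ∧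
    (∀ (z : Fin c → ℤ) (y : EuclideanSpace ℝ (Fin n)) (t : Fin c → ℝ),
        (∀ j, |t j| < ‖gs j‖ / 2) →
        y = (∑ j, (z j : ℝ) • a j) + ∑ j, (t j / ‖gs j‖) • gs j →
        babaiZ a gs y = z) :=
  babai_regions_tile_general a gs hgs
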